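/- Let H be an n×n real symmetric matrix with eigenvalues λ_1 ≤ ⋯ ≤ λ_n (counted with multiplicity) and corresponding orthonormal eigenvectors φ_1, …, φ_n, let 1 ≤ N < n, β > 0, and let μ ∈ ℝ satisfy Σ_{i=1}^n (1 + exp(β(λ_i − μ)))⁻¹ = N. Set ρ_i = (1 + exp(β(λ_i − μ)))⁻¹, P_{β,∞} = Σ_{i=1}^n ρ_i φ_iφ_iᵀ, and M = Σ_{i=1}^n max(β⁻¹, |λ_i − μ|) φ_iφ_iᵀ. If η > 0 and P_{β,η} ∈ C_N minimizes P ↦ E_β(P) + η⁻¹‖P‖₁ over C_N, then tr( M (P_{β,η} − P_{β,∞})² ) ≤ η⁻¹‖P_{β,∞}‖₁. -/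

import Mathlib

open Matrix BigOperators Real

noncomputable def l1Norm {n : ℕ} (P : Matrix (Fin n) (Fin n) ℝ) : ℝ :=
  ∑ i, ∑ j, |P i j|

open scoped Classical in
/-- The Fermi–Dirac entropy `S(P) = ∑_i (σ_i ln σ_i + (1−σ_i) ln(1−σ_i))` of a
symmetric matrix, computed from its eigenvalues `σ_i` (with `0 ln 0 = 0`,
which holds automatically since `Real.log 0 = 0`). -/
noncomputable def matEntropy {n : ℕ} (P : Matrix (Fin n) (Fin n) ℝ) : ℝ :=
  if h : P.IsHermitian then
    ∑ i, (h.eigenvalues i * Real.log (h.eigenvalues i) +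
      (1 - h.eigenvalues i) * Real.log (1 - h.eigenvalues i))
  else 0

noncomputable def freeEnergy {n : ℕ} (β : ℝ) (H P : Matrix (Fin n) (Fin n) ℝ) : ℝ :=
  (H * P).trace + β⁻¹ * matEntropy P

/-- The convex set `C_N` of the paper. -/
def CN (n N : ℕ) : Set (Matrix (Fin n) (Fin n) ℝ) :=
  {P | P.IsSymm ∧ P.trace = (N : ℝ) ∧ P.PosSemidef ∧
    ((1 : Matrix (Fin n) (Fin n) ℝ) - P).PosSemidef}

/-!
Write `P_{β,η} = ∑ p_i u_i u_iᵀ` and let `C_ij = (u_i ⬝ φ_j)²`, a doubly stochastic matrix.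
Since `log (1 - ρ_j) - log ρ_j = β (λ_j - μ)`, the free-energy gap is a mixture of binary
relative entropies,
  `E_β(P_{β,η}) - E_β(P_{β,∞}) = β⁻¹ ∑_ij C_ij KL(p_i ‖ ρ_j)`,
while `tr(M (P_{β,η} - P_{β,∞})²) = ∑_ij C_ij max(β⁻¹, |λ_j - μ|) (p_i - ρ_j)²`. The scalar
inequality `KL(p ‖ q) ≥ max(1, |logit q|) (p - q)²` compares the two termwise, and testing the
minimality of `P_{β,η}` against `P_{β,∞} ∈ C_N` bounds the gap by `η⁻¹ ‖P_{β,∞}‖₁`.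

When `|logit q| ≤ 2` the scalar inequality is Pinsker's `KL ≥ 2 (p - q)²`. Otherwise, taking
`q ≤ 1/2` by symmetry and `L = -logit q`, the function `G p = KL(p ‖ q) - L (p - q)²` has
`G'' = 1 / (p (1 - p)) - 2L`: it is convex on `[0, a]` and `[1 - a, 1]` and concave on
`[a, 1 - a]`, where `2 L a (1 - a) = 1`. Its tangent lines at `q` and at `1 - q` are nonnegative on
the outer pieces, and concavity carries this over to the middle one.
-/

open Set

theorem ConvexOn.add_mul_sub_le_of_hasDerivAt {S : Set ℝ} {f : ℝ → ℝ} {f' x y : ℝ}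
    (hf : ConvexOn ℝ S f) (hx : x ∈ S) (hy : y ∈ S) (hd : HasDerivAt f f' x) :
    f x + f' * (y - x) ≤ f y := by
  rcases lt_trichotomy x y with hxy | rfl | hxy
  · have h := hf.le_slope_of_hasDerivAt hx hy hxy hd
    rw [slope_def_field, le_div_iff₀ (sub_pos.2 hxy)] at h
    linarith
  · simp
  · have h := hf.slope_le_of_hasDerivAt hy hx hxy hd
    rw [slope_def_field, div_le_iff₀ (sub_pos.2 hxy)] at h
    linarith

noncomputable def logit (t : ℝ) : ℝ := log t - log (1 - t)

lemma logit_one_sub (t : ℝ) : logit (1 - t) = -logit t := by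
  simp only [logit, sub_sub_cancel]
  ring

lemma hasDerivAt_logit {t : ℝ} (ht0 : 0 < t) (ht1 : t < 1) :
    HasDerivAt logit (t * (1 - t))⁻¹ t := by
  have h := (hasDerivAt_log ht0.ne').fun_sub (((hasDerivAt_id' t).const_sub 1).log (by linarith))
  have : 1 - t ≠ 0 := (sub_pos.2 ht1).ne'
  exact h.congr_deriv (by field_simp; ring)

/-- The Bregman divergence of `-binEntropy`; for `q ∈ (0, 1)` and `p ∈ [0, 1]` it is the binary
relative entropy `KL(p ‖ q)`. -/
noncomputable def binKL (p q : ℝ) : ℝ :=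
  binEntropy q - binEntropy p - logit q * (p - q)

lemma binKL_one_sub_one_sub (p q : ℝ) : binKL (1 - p) (1 - q) = binKL p q := by
  simp only [binKL, binEntropy_one_sub, logit_one_sub]
  ring

section BinKLSubMulSq

variable {q c : ℝ}

lemma hasDerivAt_binKL_sub_mul_sq {t : ℝ} (ht0 : 0 < t) (ht1 : t < 1) :
    HasDerivAt (fun p => binKL p q - c * (p - q) ^ 2) (logit t - logit q - 2 * c * (t - q)) t := by
  have h := (((hasDerivAt_binEntropy ht0.ne' ht1.ne).const_sub (binEntropy q)).fun_sub
    (((hasDerivAt_id' t).sub_const q).const_mul (logit q))).fun_sub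
    ((((hasDerivAt_id' t).sub_const q).fun_pow 2).const_mul c)
  exact h.congr_deriv (by simp only [logit]; push_cast; ring)

lemma hasDerivAt_logit_sub_sub_mul {t : ℝ} (ht0 : 0 < t) (ht1 : t < 1) :
    HasDerivAt (fun s => logit s - logit q - 2 * c * (s - q)) ((t * (1 - t))⁻¹ - 2 * c) t := by
  have h := ((hasDerivAt_logit ht0 ht1).sub_const (logit q)).fun_sub
    (((hasDerivAt_id' t).sub_const q).const_mul (2 * c))
  exact h.congr_deriv (by ring)

lemma convexOn_binKL_sub_mul_sq {a b : ℝ} (ha : 0 ≤ a) (hb : b ≤ 1)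
    (h : ∀ t ∈ Ioo a b, 2 * c * (t * (1 - t)) ≤ 1) :
    ConvexOn ℝ (Icc a b) (fun p => binKL p q - c * (p - q) ^ 2) := by
  have hmem : ∀ t ∈ Ioo a b, 0 < t ∧ t < 1 := fun t ht => ⟨ha.trans_lt ht.1, ht.2.trans_le hb⟩
  refine convexOn_of_hasDerivWithinAt2_nonneg (convex_Icc a b)
    (f' := fun s => logit s - logit q - 2 * c * (s - q)) (f'' := fun t => (t * (1 - t))⁻¹ - 2 * c)
    (by unfold binKL logit; fun_prop) (fun t ht => ?_) (fun t ht => ?_) (fun t ht => ?_) <;>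
    rw [interior_Icc] at *
  · exact (hasDerivAt_binKL_sub_mul_sq (hmem t ht).1 (hmem t ht).2).hasDerivWithinAt
  · exact (hasDerivAt_logit_sub_sub_mul (hmem t ht).1 (hmem t ht).2).hasDerivWithinAt
  · have htt : 0 < t * (1 - t) := mul_pos (hmem t ht).1 (by linarith [(hmem t ht).2])
    rw [sub_nonneg, ← one_div, le_div_iff₀ htt]
    exact h t ht

lemma concaveOn_binKL_sub_mul_sq {a b : ℝ} (ha : 0 ≤ a) (hb : b ≤ 1)
    (h : ∀ t ∈ Ioo a b, 1 ≤ 2 * c * (t * (1 - t))) :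
    ConcaveOn ℝ (Icc a b) (fun p => binKL p q - c * (p - q) ^ 2) := by
  have hmem : ∀ t ∈ Ioo a b, 0 < t ∧ t < 1 := fun t ht => ⟨ha.trans_lt ht.1, ht.2.trans_le hb⟩
  refine concaveOn_of_hasDerivWithinAt2_nonpos (convex_Icc a b)
    (f' := fun s => logit s - logit q - 2 * c * (s - q)) (f'' := fun t => (t * (1 - t))⁻¹ - 2 * c)
    (by unfold binKL logit; fun_prop) (fun t ht => ?_) (fun t ht => ?_) (fun t ht => ?_) <;>
    rw [interior_Icc] at *
  · exact (hasDerivAt_binKL_sub_mul_sq (hmem t ht).1 (hmem t ht).2).hasDerivWithinAt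
  · exact (hasDerivAt_logit_sub_sub_mul (hmem t ht).1 (hmem t ht).2).hasDerivWithinAt
  · have htt : 0 < t * (1 - t) := mul_pos (hmem t ht).1 (by linarith [(hmem t ht).2])
    rw [sub_nonpos, ← one_div, div_le_iff₀ htt]
    exact h t ht

lemma mul_sq_le_binKL_of_convexOn {S : Set ℝ} {p : ℝ}
    (hG : ConvexOn ℝ S (fun p => binKL p q - c * (p - q) ^ 2))
    (hq : q ∈ S) (hp : p ∈ S) (hq0 : 0 < q) (hq1 : q < 1) :
    c * (p - q) ^ 2 ≤ binKL p q := by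
  have h := hG.add_mul_sub_le_of_hasDerivAt hq hp (hasDerivAt_binKL_sub_mul_sq hq0 hq1)
  simp only [binKL, sub_self, ne_eq, OfNat.ofNat_ne_zero, not_false_eq_true, zero_pow, mul_zero,
    zero_mul, add_zero, sub_nonneg] at h
  exact h

end BinKLSubMulSq

lemma two_mul_sq_le_binKL {p q : ℝ} (hq0 : 0 < q) (hq1 : q < 1) (hp : p ∈ Icc 0 1) :
    2 * (p - q) ^ 2 ≤ binKL p q :=
  mul_sq_le_binKL_of_convexOn
    (convexOn_binKL_sub_mul_sq le_rfl le_rfl fun t _ => by nlinarith [sq_nonneg (2 * t - 1)])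
    ⟨hq0.le, hq1.le⟩ hp hq0 hq1

lemma neg_log_le_inv_two_mul {q : ℝ} (hq : 0 < q) : -log q ≤ (2 * q)⁻¹ := by
  have h1 := log_le_sub_one_of_pos (inv_pos.2 (mul_pos two_pos hq))
  have h2 := log_le_sub_one_of_pos (two_pos (α := ℝ))
  rw [log_inv, log_mul two_ne_zero hq.ne'] at h1
  linarith

lemma exists_two_mul_mul_one_sub_eq_one {L : ℝ} (hL : 2 ≤ L) :
    ∃ a, 0 < a ∧ a ≤ 1 / 2 ∧ 2 * L * (a * (1 - a)) = 1 := by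
  have hL0 : 0 < L := by linarith
  have hs : 0 ≤ 1 - 2 / L := by rw [sub_nonneg, div_le_one hL0]; exact hL
  have hs1 : √(1 - 2 / L) < 1 := by
    rw [sqrt_lt' one_pos]
    linarith [show 0 < 2 / L by positivity]
  refine ⟨(1 - √(1 - 2 / L)) / 2, by linarith, by linarith [sqrt_nonneg (1 - 2 / L)], ?_⟩
  rw [show ∀ s : ℝ, 2 * L * ((1 - s) / 2 * (1 - (1 - s) / 2)) = L * (1 - s ^ 2) / 2 by
    intro s; ring, sq_sqrt hs]
  field_simp
  ring

lemma neg_logit_mul_sq_le_binKL {p q : ℝ} (hq0 : 0 < q) (hq : q ≤ 1 / 2) (hL : 2 ≤ -logit q)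
    (hp : p ∈ Icc 0 1) : -logit q * (p - q) ^ 2 ≤ binKL p q := by
  set L := -logit q with hLdef
  set G := fun p => binKL p q - L * (p - q) ^ 2 with hG
  suffices 0 ≤ G p by simp only [hG] at this; linarith
  have hL0 : 0 < L := by linarith
  obtain ⟨a, ha0, ha, haa⟩ := exists_two_mul_mul_one_sub_eq_one hL
  have hqa : q ≤ a := by
    have hLq : L * q ≤ 1 / 2 := by
      have : L ≤ (2 * q)⁻¹ := by
        linarith [neg_log_le_inv_two_mul hq0, log_nonpos (by linarith : 0 ≤ 1 - q) (by linarith),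
          show L = log (1 - q) - log q by simp only [hLdef, logit]; ring]
      calc L * q ≤ (2 * q)⁻¹ * q := by gcongr
        _ = 1 / 2 := by field_simp
    by_contra! hqa
    have : 0 < (q - a) * (1 - q - a) := mul_pos (by linarith) (by linarith)
    nlinarith [mul_pos hL0 this]
  have hleft : ∀ p ∈ Icc 0 a, 0 ≤ G p := by
    intro p hp
    have := mul_sq_le_binKL_of_convexOn (c := L)
      (convexOn_binKL_sub_mul_sq (a := 0) (b := a) le_rfl (by linarith) fun t ht => by
        nlinarith [mul_nonneg hL0.le (mul_nonneg (by linarith [ht.2] : 0 ≤ a - t)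
          (by linarith [ht.2] : 0 ≤ 1 - a - t))])
      ⟨hq0.le, hqa⟩ hp hq0 (by linarith)
    simp only [hG]; linarith
  have hright : ∀ p ∈ Icc (1 - a) 1, 0 ≤ G p := by
    intro p hp
    have hconv := convexOn_binKL_sub_mul_sq (q := q) (c := L) (a := 1 - a) (b := 1) (by linarith)
      le_rfl fun t ht => by
        nlinarith [mul_nonneg hL0.le (mul_nonneg (by linarith [ht.1] : 0 ≤ t - a)
          (by linarith [ht.1] : 0 ≤ t - (1 - a)))]
    have h := hconv.add_mul_sub_le_of_hasDerivAt ⟨by linarith, by linarith⟩ hp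
      (hasDerivAt_binKL_sub_mul_sq (q := q) (c := L) (t := 1 - q) (by linarith) (by linarith))
    have hG1 : G (1 - q) = 2 * q * L * (1 - 2 * q) := by
      simp only [hG, binKL, binEntropy_one_sub, hLdef]; ring
    have hdG : logit (1 - q) - logit q - 2 * L * (1 - q - q) = 4 * L * q := by
      rw [logit_one_sub, hLdef]; ring
    change G (1 - q) + _ * (p - (1 - q)) ≤ G p at h
    rw [hG1, hdG] at h
    nlinarith [mul_nonneg (mul_nonneg hq0.le hL0.le) (by linarith [hp.1] : 0 ≤ 2 * p - 1)]
  rcases le_total p a with hpa | hpa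
  · exact hleft p ⟨hp.1, hpa⟩
  rcases le_total (1 - a) p with hpa' | hpa'
  · exact hright p ⟨hpa', hp.2⟩
  have hconc := concaveOn_binKL_sub_mul_sq (q := q) (c := L) (a := a) (b := 1 - a) ha0.le
    (by linarith) fun t ht => by
      nlinarith [mul_nonneg hL0.le (mul_nonneg (by linarith [ht.1] : 0 ≤ t - a)
        (by linarith [ht.2] : 0 ≤ 1 - a - t))]
  calc 0 ≤ min (G a) (G (1 - a)) :=
        le_min (hleft a ⟨ha0.le, le_rfl⟩) (hright (1 - a) ⟨le_rfl, by linarith⟩)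
    _ ≤ G p := hconc.min_le_of_mem_Icc (left_mem_Icc.2 (by linarith))
        (right_mem_Icc.2 (by linarith)) ⟨hpa, hpa'⟩

lemma max_one_abs_logit_mul_sq_le_binKL {p q : ℝ} (hq0 : 0 < q) (hq1 : q < 1)
    (hp : p ∈ Icc 0 1) : max 1 |logit q| * (p - q) ^ 2 ≤ binKL p q := by
  wlog hq : q ≤ 1 / 2 generalizing p q
  · have h := this (p := 1 - p) (q := 1 - q) (by linarith) (by linarith)
      ⟨by linarith [hp.2], by linarith [hp.1]⟩ (by linarith)
    rwa [binKL_one_sub_one_sub, logit_one_sub, abs_neg,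
      show (1 - p - (1 - q)) ^ 2 = (p - q) ^ 2 by ring] at h
  have hlogit : logit q ≤ 0 := sub_nonpos.2 (log_le_log hq0 (by linarith))
  rw [abs_of_nonpos hlogit]
  rcases le_total (-logit q) 2 with hL | hL
  · calc max 1 (-logit q) * (p - q) ^ 2 ≤ 2 * (p - q) ^ 2 := by
          gcongr; exact max_le one_le_two hL
      _ ≤ binKL p q := two_mul_sq_le_binKL hq0 hq1 hp
  · rw [max_eq_right (by linarith)]
    exact neg_logit_mul_sq_le_binKL hq0 hq hL hp

lemma max_inv_abs_mul_sq_le_inv_mul_binKL {β μ x p q : ℝ} (hβ : 0 < β) (hp : p ∈ Icc 0 1)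
    (hq0 : 0 < q) (hq1 : q < 1) (hq : logit q = β * (μ - x)) :
    max β⁻¹ |x - μ| * (p - q) ^ 2 ≤ β⁻¹ * binKL p q := by
  have h := max_one_abs_logit_mul_sq_le_binKL hq0 hq1 hp
  rw [hq, abs_mul, abs_of_pos hβ, abs_sub_comm, ← mul_inv_cancel₀ hβ.ne',
    ← mul_max_of_nonneg _ _ hβ.le, mul_assoc] at h
  rwa [le_inv_mul_iff₀ hβ]

noncomputable def fermiDirac (β μ x : ℝ) : ℝ := (1 + exp (β * (x - μ)))⁻¹

section FermiDirac

variable {β μ x : ℝ}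

lemma fermiDirac_pos : 0 < fermiDirac β μ x := by unfold fermiDirac; positivity

lemma fermiDirac_lt_one : fermiDirac β μ x < 1 :=
  inv_lt_one_of_one_lt₀ (lt_add_of_pos_right 1 (exp_pos _))

lemma logit_fermiDirac : logit (fermiDirac β μ x) = β * (μ - x) := by
  have h1 : 1 - fermiDirac β μ x = exp (β * (x - μ)) * fermiDirac β μ x := by
    unfold fermiDirac; field_simp; ring
  rw [logit, h1, log_mul (exp_pos _).ne' fermiDirac_pos.ne', log_exp]
  ring

end FermiDirac

section DotProduct

variable {m : Type*} [Fintype m]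

lemma vecMulVec_self_mulVec (a x : m → ℝ) : vecMulVec a a *ᵥ x = (a ⬝ᵥ x) • a := by
  rw [vecMulVec_mulVec, op_smul_eq_smul]

lemma trace_sum_smul_vecMulVec_mul (v : m → m → ℝ) (d : m → ℝ) (B : Matrix m m ℝ) :
    ((∑ j, d j • vecMulVec (v j) (v j)) * B).trace = ∑ j, d j * (v j ⬝ᵥ B *ᵥ v j) := by
  simp only [Finset.sum_mul, trace_sum, smul_mul, trace_smul, vecMulVec_mul, trace_vecMulVec,
    smul_eq_mul, dotProduct_mulVec, dotProduct_comm (v _) (_ ᵥ* B)]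

lemma isSymm_sum_smul_vecMulVec_self (v : m → m → ℝ) (d : m → ℝ) :
    (∑ j, d j • vecMulVec (v j) (v j)).IsSymm := by
  simp [IsSymm, transpose_sum, transpose_smul, transpose_vecMulVec]

lemma posSemidef_sum_smul_vecMulVec_self (v : m → m → ℝ) {d : m → ℝ} (hd : ∀ j, 0 ≤ d j) :
    (∑ j, d j • vecMulVec (v j) (v j)).PosSemidef :=
  posSemidef_sum _ fun j _ => by
    simpa using (posSemidef_vecMulVec_self_star (v j)).smul (hd j)

lemma Matrix.IsSymm.dotProduct_mulVec_comm {A : Matrix m m ℝ} (hA : A.IsSymm) (x y : m → ℝ) :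
    x ⬝ᵥ A *ᵥ y = A *ᵥ x ⬝ᵥ y := by
  rw [dotProduct_mulVec, ← vecMul_transpose, hA.eq]

lemma Matrix.IsSymm.dotProduct_mulVec_of_mulVec_eq {A : Matrix m m ℝ} (hA : A.IsSymm) {u : m → ℝ}
    {a : ℝ} (hu : A *ᵥ u = a • u) (x : m → ℝ) : u ⬝ᵥ A *ᵥ x = a * (u ⬝ᵥ x) := by
  rw [hA.dotProduct_mulVec_comm, hu, smul_dotProduct, smul_eq_mul]

end DotProduct

/-- Orthonormality for the dot product: `m → ℝ` carries the sup norm, so Mathlib's `Orthonormal`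
does not apply to it. -/
def DotOrthonormal {m : Type*} [Fintype m] [DecidableEq m] (v : m → m → ℝ) : Prop :=
  ∀ i j, v i ⬝ᵥ v j = if i = j then 1 else 0

namespace DotOrthonormal

variable {m : Type*} [Fintype m] [DecidableEq m] {u v : m → m → ℝ}

lemma sum_vecMulVec_self (hv : DotOrthonormal v) : ∑ i, vecMulVec (v i) (v i) = 1 := by
  have h : of v * (of v)ᵀ = 1 := by
    ext i j
    simpa [mul_apply, dotProduct, one_apply] using hv i j
  have h' : (of v)ᵀ * of v = 1 := mul_eq_one_comm.mp h
  ext a b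
  simpa [mul_apply, Matrix.sum_apply, vecMulVec_apply] using congrFun (congrFun h' a) b

lemma sum_dotProduct_mul_dotProduct (hv : DotOrthonormal v) (x y : m → ℝ) :
    ∑ i, (v i ⬝ᵥ x) * (v i ⬝ᵥ y) = x ⬝ᵥ y := by
  conv_rhs => rw [← one_mulVec y, ← hv.sum_vecMulVec_self, sum_mulVec, dotProduct_sum]
  simp only [vecMulVec_self_mulVec, dotProduct_smul, smul_eq_mul, dotProduct_comm x (v _), mul_comm]

lemma sum_sq_dotProduct (hv : DotOrthonormal v) (x : m → ℝ) : ∑ i, (v i ⬝ᵥ x) ^ 2 = x ⬝ᵥ x := by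
  simpa only [sq] using hv.sum_dotProduct_mul_dotProduct x x

lemma sum_sq_dotProduct_left (hu : DotOrthonormal u) (hv : DotOrthonormal v) (j : m) :
    ∑ i, (u i ⬝ᵥ v j) ^ 2 = 1 := by
  simp [hu.sum_sq_dotProduct, hv j j]

lemma sum_sq_dotProduct_right (hu : DotOrthonormal u) (hv : DotOrthonormal v) (i : m) :
    ∑ j, (u i ⬝ᵥ v j) ^ 2 = 1 := by
  simp [dotProduct_comm (u i), hv.sum_sq_dotProduct, hu i i]

lemma sum_smul_vecMulVec_mulVec (hv : DotOrthonormal v) (d : m → ℝ) (j : m) :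
    (∑ i, d i • vecMulVec (v i) (v i)) *ᵥ v j = d j • v j := by
  simp [sum_mulVec, smul_mulVec, vecMulVec_self_mulVec, hv _ j]

lemma eq_sum_smul_vecMulVec {A : Matrix m m ℝ} {d : m → ℝ} (hv : DotOrthonormal v)
    (hA : ∀ j, A *ᵥ v j = d j • v j) : A = ∑ j, d j • vecMulVec (v j) (v j) := by
  conv_lhs => rw [← mul_one A, ← hv.sum_vecMulVec_self, Finset.mul_sum]
  simp only [mul_vecMulVec, hA, smul_vecMulVec]

lemma trace_eq_sum {A : Matrix m m ℝ} {d : m → ℝ} (hv : DotOrthonormal v)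
    (hA : ∀ j, A *ᵥ v j = d j • v j) : A.trace = ∑ j, d j := by
  simp [hv.eq_sum_smul_vecMulVec hA, trace_sum, trace_vecMulVec, hv _ _]

end DotOrthonormal

section Spectral

variable {m : Type*} [Fintype m] [DecidableEq m] {A Q B : Matrix m m ℝ} {u v : m → m → ℝ}
  {a b p : m → ℝ}

lemma Matrix.IsHermitian.dotOrthonormal_eigenvectorBasis (hA : A.IsHermitian) :
    DotOrthonormal fun i => (hA.eigenvectorBasis i).ofLp := by
  intro i j
  simpa [PiLp.inner_apply, dotProduct, mul_comm] using
    orthonormal_iff_ite.mp hA.eigenvectorBasis.orthonormal i j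

lemma Matrix.IsSymm.exists_dotOrthonormal_eigen (hA : A.IsSymm) :
    ∃ u : m → m → ℝ, ∃ a : m → ℝ, DotOrthonormal u ∧ ∀ i, A *ᵥ u i = a i • u i :=
  have hA' := isHermitian_iff_isSymm.2 hA
  ⟨_, _, hA'.dotOrthonormal_eigenvectorBasis, hA'.mulVec_eigenvectorBasis⟩

/-- The overlaps `(u i ⬝ᵥ v j) ^ 2` form a doubly stochastic matrix vanishing unless
`a i = b j`. -/
lemma Matrix.IsSymm.sum_comp_eq_of_mulVec_eq (hA : A.IsSymm) (hu : DotOrthonormal u)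
    (hv : DotOrthonormal v) (hAu : ∀ i, A *ᵥ u i = a i • u i) (hAv : ∀ j, A *ᵥ v j = b j • v j)
    (g : ℝ → ℝ) : ∑ i, g (a i) = ∑ j, g (b j) := by
  have hab : ∀ i j, a i * (u i ⬝ᵥ v j) = b j * (u i ⬝ᵥ v j) := fun i j => by
    rw [← hA.dotProduct_mulVec_of_mulVec_eq (hAu i), hAv, dotProduct_smul, smul_eq_mul, mul_comm]
  have hg : ∀ i j, (u i ⬝ᵥ v j) ^ 2 * g (a i) = (u i ⬝ᵥ v j) ^ 2 * g (b j) := fun i j => by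
    by_cases h : u i ⬝ᵥ v j = 0
    · simp [h]
    · rw [mul_right_cancel₀ h (hab i j)]
  calc ∑ i, g (a i) = ∑ i, ∑ j, (u i ⬝ᵥ v j) ^ 2 * g (a i) := by
        simp [← Finset.sum_mul, hu.sum_sq_dotProduct_right hv]
    _ = ∑ j, ∑ i, (u i ⬝ᵥ v j) ^ 2 * g (b j) := by simp only [hg]; exact Finset.sum_comm
    _ = ∑ j, g (b j) := by simp [← Finset.sum_mul, hu.sum_sq_dotProduct_left hv]

lemma Matrix.IsSymm.dotProduct_mulVec_self_eq_sum (hQ : Q.IsSymm) (hu : DotOrthonormal u)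
    (hQu : ∀ i, Q *ᵥ u i = p i • u i) (x : m → ℝ) :
    x ⬝ᵥ Q *ᵥ x = ∑ i, p i * (u i ⬝ᵥ x) ^ 2 := by
  rw [← hu.sum_dotProduct_mul_dotProduct]
  refine Finset.sum_congr rfl fun i _ => ?_
  rw [hQ.dotProduct_mulVec_of_mulVec_eq (hQu i)]
  ring

lemma Matrix.IsSymm.dotProduct_sub_mul_sub_mulVec (hQ : Q.IsSymm) (hB : B.IsSymm)
    (hu : DotOrthonormal u) (hQu : ∀ i, Q *ᵥ u i = p i • u i) {x : m → ℝ} {r : ℝ}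
    (hBx : B *ᵥ x = r • x) :
    x ⬝ᵥ ((Q - B) * (Q - B)) *ᵥ x = ∑ i, (u i ⬝ᵥ x) ^ 2 * (p i - r) ^ 2 := by
  rw [← mulVec_mulVec, (hQ.sub hB).dotProduct_mulVec_comm, ← hu.sum_sq_dotProduct]
  refine Finset.sum_congr rfl fun i _ => ?_
  rw [sub_mulVec, dotProduct_sub, hQ.dotProduct_mulVec_of_mulVec_eq (hQu i), hBx,
    dotProduct_smul, smul_eq_mul]
  ring

lemma Matrix.IsSymm.trace_sum_smul_vecMulVec_mul_sub_mul_sub {ρ : m → ℝ} (hQ : Q.IsSymm)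
    (hB : B.IsSymm) (hu : DotOrthonormal u) (hQu : ∀ i, Q *ᵥ u i = p i • u i)
    (hBv : ∀ j, B *ᵥ v j = ρ j • v j) (w : m → ℝ) :
    ((∑ j, w j • vecMulVec (v j) (v j)) * ((Q - B) * (Q - B))).trace =
      ∑ j, w j * ∑ i, (u i ⬝ᵥ v j) ^ 2 * (p i - ρ j) ^ 2 := by
  simp only [trace_sum_smul_vecMulVec_mul, hQ.dotProduct_sub_mul_sub_mulVec hB hu hQu (hBv _)]

end Spectral

section FinDim

variable {n N : ℕ} {v : Fin n → Fin n → ℝ}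

lemma l1Norm_nonneg (P : Matrix (Fin n) (Fin n) ℝ) : 0 ≤ l1Norm P :=
  Finset.sum_nonneg fun _ _ => Finset.sum_nonneg fun _ _ => abs_nonneg _

lemma matEntropy_eq_of_mulVec_eq {A : Matrix (Fin n) (Fin n) ℝ} {d : Fin n → ℝ} (hA : A.IsSymm)
    (hv : DotOrthonormal v) (hAv : ∀ j, A *ᵥ v j = d j • v j) :
    matEntropy A = -∑ j, binEntropy (d j) := by
  have hA' := isHermitian_iff_isSymm.2 hA
  rw [matEntropy, dif_pos hA', hA.sum_comp_eq_of_mulVec_eq hA'.dotOrthonormal_eigenvectorBasis hv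
    hA'.mulVec_eigenvectorBasis hAv fun x => x * log x + (1 - x) * log (1 - x),
    ← Finset.sum_neg_distrib]
  simp [binEntropy, log_inv, add_comm]

lemma sum_smul_vecMulVec_mem_CN (hv : DotOrthonormal v) {d : Fin n → ℝ}
    (hd : ∀ j, d j ∈ Icc 0 1) (hsum : ∑ j, d j = N) :
    ∑ j, d j • vecMulVec (v j) (v j) ∈ CN n N := by
  have hone : 1 - ∑ j, d j • vecMulVec (v j) (v j) = ∑ j, (1 - d j) • vecMulVec (v j) (v j) := by
    simp [sub_smul, Finset.sum_sub_distrib, hv.sum_vecMulVec_self]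
  refine ⟨isSymm_sum_smul_vecMulVec_self v d, ?_,
    posSemidef_sum_smul_vecMulVec_self v fun j => (hd j).1, ?_⟩
  · rw [hv.trace_eq_sum (hv.sum_smul_vecMulVec_mulVec d), hsum]
  · rw [hone]
    exact posSemidef_sum_smul_vecMulVec_self v fun j => sub_nonneg.2 (hd j).2

lemma mem_Icc_of_mem_CN_of_mulVec_eq {P : Matrix (Fin n) (Fin n) ℝ} (hP : P ∈ CN n N)
    {x : Fin n → ℝ} {a : ℝ} (hx : x ⬝ᵥ x = 1) (hPx : P *ᵥ x = a • x) : a ∈ Icc 0 1 := by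
  have h0 := hP.2.2.1.dotProduct_mulVec_nonneg x
  have h1 := hP.2.2.2.dotProduct_mulVec_nonneg x
  simp only [star_trivial, sub_mulVec, one_mulVec, dotProduct_sub, hPx, dotProduct_smul,
    smul_eq_mul, hx] at h0 h1
  exact ⟨by linarith, by linarith⟩

lemma freeEnergy_sub_freeEnergy_eq_sum_binKL {H Q : Matrix (Fin n) (Fin n) ℝ}
    {u : Fin n → Fin n → ℝ} {lam p ρ : Fin n → ℝ} {β μ : ℝ} (hβ : β ≠ 0) (hv : DotOrthonormal v)
    (hHv : ∀ j, H *ᵥ v j = lam j • v j) (hρ : ∀ j, logit (ρ j) = β * (μ - lam j))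
    (hQ : Q.IsSymm) (hu : DotOrthonormal u) (hQu : ∀ i, Q *ᵥ u i = p i • u i)
    (htr : ∑ i, p i = ∑ j, ρ j) :
    freeEnergy β H Q - freeEnergy β H (∑ j, ρ j • vecMulVec (v j) (v j)) =
      β⁻¹ * ∑ j, ∑ i, (u i ⬝ᵥ v j) ^ 2 * binKL (p i) (ρ j) := by
  have hHQ : (H * Q).trace = ∑ j, ∑ i, (u i ⬝ᵥ v j) ^ 2 * lam j * p i := by
    rw [hv.eq_sum_smul_vecMulVec hHv, trace_sum_smul_vecMulVec_mul]
    simp only [hQ.dotProduct_mulVec_self_eq_sum hu hQu, Finset.mul_sum]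
    exact Finset.sum_congr rfl fun j _ => Finset.sum_congr rfl fun i _ => by ring
  have hHP : (H * ∑ j, ρ j • vecMulVec (v j) (v j)).trace = ∑ j, lam j * ρ j := by
    rw [hv.eq_sum_smul_vecMulVec hHv, trace_sum_smul_vecMulVec_mul]
    simp [hv.sum_smul_vecMulVec_mulVec, hv _ _]
  have hsplit : ∀ i j, binKL (p i) (ρ j) = (binEntropy (ρ j) - β * (lam j * ρ j) + β * μ * ρ j)
      + (-binEntropy (p i) - β * μ * p i) + β * (lam j * p i) := fun i j => by
    rw [binKL, hρ]
    ring
  have hcol : ∀ f : Fin n → ℝ, ∑ j, ∑ i, (u i ⬝ᵥ v j) ^ 2 * f j = ∑ j, f j := fun f => by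
    simp [← Finset.sum_mul, hu.sum_sq_dotProduct_left hv]
  have hrow : ∀ f : Fin n → ℝ, ∑ j, ∑ i, (u i ⬝ᵥ v j) ^ 2 * f i = ∑ i, f i := fun f => by
    rw [Finset.sum_comm]; simp [← Finset.sum_mul, hu.sum_sq_dotProduct_right hv]
  simp only [hsplit, mul_add, Finset.sum_add_distrib, hcol, hrow, mul_left_comm _ β,
    ← Finset.mul_sum]
  rw [freeEnergy, freeEnergy, hHQ, hHP, matEntropy_eq_of_mulVec_eq hQ hu hQu,
    matEntropy_eq_of_mulVec_eq (isSymm_sum_smul_vecMulVec_self v ρ) hv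
      (hv.sum_smul_vecMulVec_mulVec ρ)]
  simp only [Finset.sum_sub_distrib, Finset.sum_neg_distrib, ← Finset.mul_sum, htr]
  field_simp
  ring

end FinDim

theorem stmt8_general {n N : ℕ}
    (H : Matrix (Fin n) (Fin n) ℝ)
    (lam : Fin n → ℝ)
    (φ : Fin n → Fin n → ℝ)
    (horth : ∀ i j, φ i ⬝ᵥ φ j = if i = j then (1 : ℝ) else 0)
    (heig : ∀ i, H.mulVec (φ i) = lam i • φ i)
    (β : ℝ) (hβ : 0 < β) (μ : ℝ)
    (hμ : ∑ i, (1 + Real.exp (β * (lam i - μ)))⁻¹ = (N : ℝ))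
    (ρ : Fin n → ℝ) (hρ : ∀ i, ρ i = (1 + Real.exp (β * (lam i - μ)))⁻¹)
    (Pβ : Matrix (Fin n) (Fin n) ℝ)
    (hPβ : Pβ = ∑ i, ρ i • vecMulVec (φ i) (φ i))
    (M : Matrix (Fin n) (Fin n) ℝ)
    (hM : M = ∑ i, max β⁻¹ |lam i - μ| • vecMulVec (φ i) (φ i))
    (η : ℝ) (hη : 0 < η)
    (Pβη : Matrix (Fin n) (Fin n) ℝ) (hPβη : Pβη ∈ CN n N)
    (hmin : ∀ P ∈ CN n N,
      freeEnergy β H Pβη + η⁻¹ * l1Norm Pβη ≤ freeEnergy β H P + η⁻¹ * l1Norm P) :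
    (M * ((Pβη - Pβ) * (Pβη - Pβ))).trace ≤ η⁻¹ * l1Norm Pβ := by
  have hφ : DotOrthonormal φ := horth
  have hρ01 : ∀ j, ρ j ∈ Ioo 0 1 := fun j => hρ j ▸ ⟨fermiDirac_pos, fermiDirac_lt_one⟩
  have hρlogit : ∀ j, logit (ρ j) = β * (μ - lam j) := fun j => hρ j ▸ logit_fermiDirac
  have hρsum : ∑ j, ρ j = N := by simpa only [hρ] using hμ
  obtain ⟨u, p, hu, hQu⟩ := hPβη.1.exists_dotOrthonormal_eigen
  have hp : ∀ i, p i ∈ Icc 0 1 := fun i =>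
    mem_Icc_of_mem_CN_of_mulVec_eq hPβη (by simp [hu i i]) (hQu i)
  have hPβmem : Pβ ∈ CN n N :=
    hPβ ▸ sum_smul_vecMulVec_mem_CN hφ (fun j => Ioo_subset_Icc_self (hρ01 j)) hρsum
  subst hPβ hM
  calc _ = ∑ j, max β⁻¹ |lam j - μ| * ∑ i, (u i ⬝ᵥ φ j) ^ 2 * (p i - ρ j) ^ 2 :=
        hPβη.1.trace_sum_smul_vecMulVec_mul_sub_mul_sub (isSymm_sum_smul_vecMulVec_self φ ρ) hu
          hQu (hφ.sum_smul_vecMulVec_mulVec ρ) _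
    _ ≤ β⁻¹ * ∑ j, ∑ i, (u i ⬝ᵥ φ j) ^ 2 * binKL (p i) (ρ j) := by
        simp only [Finset.mul_sum]
        refine Finset.sum_le_sum fun j _ => Finset.sum_le_sum fun i _ => ?_
        rw [mul_left_comm, mul_left_comm β⁻¹]
        exact mul_le_mul_of_nonneg_left (max_inv_abs_mul_sq_le_inv_mul_binKL hβ (hp i)
          (hρ01 j).1 (hρ01 j).2 (hρlogit j)) (sq_nonneg _)
    _ = freeEnergy β H Pβη - freeEnergy β H (∑ j, ρ j • vecMulVec (φ j) (φ j)) :=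
        (freeEnergy_sub_freeEnergy_eq_sum_binKL hβ.ne' hφ heig hρlogit hPβη.1 hu hQu
          (by rw [← hu.trace_eq_sum hQu, hPβη.2.1, hρsum])).symm
    _ ≤ η⁻¹ * l1Norm (∑ j, ρ j • vecMulVec (φ j) (φ j)) :=
        by linarith [hmin _ hPβmem, mul_nonneg (inv_nonneg.2 hη.le) (l1Norm_nonneg Pβη)]

/-- Weighted Frobenius estimate at finite temperature:
`tr(M (P_{β,η} − P_{β,∞})²) ≤ η⁻¹ ‖P_{β,∞}‖₁` where
`M = ∑_i max(β⁻¹, |λ_i − μ|) φ_i φ_iᵀ`. -/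
theorem stmt8 {n N : ℕ} (hN1 : 1 ≤ N) (hNn : N < n)
    (H : Matrix (Fin n) (Fin n) ℝ) (hH : H.IsSymm)
    (lam : Fin n → ℝ) (hmono : Monotone lam)
    (φ : Fin n → Fin n → ℝ)
    (horth : ∀ i j, φ i ⬝ᵥ φ j = if i = j then (1 : ℝ) else 0)
    (heig : ∀ i, H.mulVec (φ i) = lam i • φ i)
    (β : ℝ) (hβ : 0 < β) (μ : ℝ)
    (hμ : ∑ i, (1 + Real.exp (β * (lam i - μ)))⁻¹ = (N : ℝ))
    (ρ : Fin n → ℝ) (hρ : ∀ i, ρ i = (1 + Real.exp (β * (lam i - μ)))⁻¹)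
    (Pβ : Matrix (Fin n) (Fin n) ℝ)
    (hPβ : Pβ = ∑ i, ρ i • vecMulVec (φ i) (φ i))
    (M : Matrix (Fin n) (Fin n) ℝ)
    (hM : M = ∑ i, max β⁻¹ |lam i - μ| • vecMulVec (φ i) (φ i))
    (η : ℝ) (hη : 0 < η)
    (Pβη : Matrix (Fin n) (Fin n) ℝ) (hPβη : Pβη ∈ CN n N)
    (hmin : ∀ P ∈ CN n N,
      freeEnergy β H Pβη + η⁻¹ * l1Norm Pβη ≤ freeEnergy β H P + η⁻¹ * l1Norm P) :
    (M * ((Pβη - Pβ) * (Pβη - Pβ))).trace ≤ η⁻¹ * l1Norm Pβ :=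
  stmt8_general H lam φ horth heig β hβ μ hμ ρ hρ Pβ hPβ M hM η hη Pβη hPβη hmin
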